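/- arXiv:1507.02670 — 4 statements merged into one kernel-verified Lean document; each statement's English description precedes it below -/
import Mathlib

section
/- Any map J : {seminorms on ℝ²} → [0,∞) satisfying monotonicity (s ≥ s' implies J(s) ≥ J(s')), homogeneity (J(λ·s) = λ²·J(s) for λ ≥ 0), and SL₂-invariance (J(s∘T) = J(s) for T ∈ SL(2,ℝ)) is continuous with respect to the sup-metric on seminorms. -/
open Matrix MeasureTheory Real

noncomputable section

/-- The Euclidean plane. -/
abbrev E2 := EuclideanSpace ℝ (Fin 2)

/-- `SL(2,ℝ)` as matrices of determinant one. -/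
abbrev SL2 := Matrix.SpecialLinearGroup (Fin 2) ℝ

/-- The seminorm `v ↦ s (M v)`, i.e. `s ∘ M`. -/
def compM (s : Seminorm ℝ E2) (M : Matrix (Fin 2) (Fin 2) ℝ) : Seminorm ℝ E2 :=
  s.comp (Matrix.toEuclideanLin M)

/-- A seminorm is a norm iff it is positive away from the origin. -/
def IsNorm (s : Seminorm ℝ E2) : Prop := ∀ v : E2, v ≠ 0 → 0 < s v

/-- Monotonicity of a functional on seminorms. -/
def Monot (J : Seminorm ℝ E2 → ℝ) : Prop := ∀ s s' : Seminorm ℝ E2, s' ≤ s → J s' ≤ J s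

/-- Degree 2 homogeneity of a functional on seminorms. -/
def Homog (J : Seminorm ℝ E2 → ℝ) : Prop :=
  ∀ (c : NNReal) (s : Seminorm ℝ E2), J (c • s) = (c : ℝ) ^ 2 * J s

/-- `SL₂`-invariance of a functional on seminorms. -/
def SL2inv (J : Seminorm ℝ E2 → ℝ) : Prop :=
  ∀ (s : Seminorm ℝ E2) (T : SL2), J (compM s (T : Matrix (Fin 2) (Fin 2) ℝ)) = J s

/-- The Reshetnyak energy `I²₊(s) = max_{v ∈ S¹} s(v)²`. -/
def Iplus (s : Seminorm ℝ E2) : ℝ := ⨆ v : Metric.sphere (0 : E2) 1, (s (v : E2)) ^ 2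

/-- The unit ball of a seminorm. -/
def unitBallS (s : Seminorm ℝ E2) : Set E2 := {v | s v ≤ 1}

/-- The ellipse `M(D̄)` is inscribed in the unit ball of `s`. -/
def ellipseIn (s : Seminorm ℝ E2) (M : Matrix (Fin 2) (Fin 2) ℝ) : Prop :=
  (Matrix.toEuclideanLin M) '' (Metric.closedBall 0 1) ⊆ unitBallS s

/-- The area of the largest ellipse inscribed in the unit ball of `s`
(the area of the Loewner ellipse); the ellipse `M(D̄)` has area `π |det M|`. -/
def LoewnerArea (s : Seminorm ℝ E2) : ℝ :=
  sSup {a : ℝ | ∃ M : Matrix (Fin 2) (Fin 2) ℝ, ellipseIn s M ∧ a = π * |M.det|}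

/-- The inscribed Riemannian (Ivanov) Jacobian `J^i(s) = π / |L|`. -/
def Ji (s : Seminorm ℝ E2) : ℝ := π / LoewnerArea s

/-- `s` is isotropic: some round disc `t·D̄` is inscribed in the unit ball of `s` and has at
least the area of every inscribed ellipse, i.e. the Loewner ellipse is a round disc. -/
def Isotropic (s : Seminorm ℝ E2) : Prop :=
  ∃ t : ℝ, 0 < t ∧ Metric.closedBall (0 : E2) t ⊆ unitBallS s ∧
    ∀ M : Matrix (Fin 2) (Fin 2) ℝ, ellipseIn s M → π * |M.det| ≤ π * t ^ 2

/-- A Jacobian (definition of area): monotone, degree-2 homogeneous, `SL₂`-invariant,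
normalized on the Euclidean norm. -/
def IsJacobian (J : Seminorm ℝ E2 → ℝ) : Prop :=
  (∀ s, 0 ≤ J s) ∧ Monot J ∧ Homog J ∧ SL2inv J ∧ J (normSeminorm ℝ E2) = 1

/-! If `s` vanishes at a unit vector `v`, shear by `diag(λ, λ⁻¹)` in the frame
`(v, perp v)`: by `SL₂`-invariance, monotonicity and homogeneity, every seminorm `t`
that is `δ`-close to `s` has `J t ≤ (λ δ + λ⁻¹ D)² J ‖·‖` with `D` bounded, and
`λ = δ^(-1/2)` makes this `O(δ)`. Otherwise `s ≥ m ‖·‖` for some `m > 0` by compactness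
of the circle, so a `δ`-close `t` satisfies `(1 - δ/m) s ≤ t ≤ (1 + δ/m) s`, whence
`|J t - J s| ≤ 3 (δ/m) J s`. -/

lemma norm_inv_norm_smul_of_ne_zero {E : Type*} [NormedAddCommGroup E] [NormedSpace ℝ E] {v : E}
    (hv : v ≠ 0) : ‖‖v‖⁻¹ • v‖ = 1 := by
  rw [norm_smul, norm_inv, norm_norm, inv_mul_cancel₀ (norm_ne_zero_iff.mpr hv)]

namespace Seminorm

variable {E : Type*} [NormedAddCommGroup E] [NormedSpace ℝ E]

lemma apply_eq_norm_mul_apply_inv_norm_smul (p : Seminorm ℝ E) (v : E) :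
    p v = ‖v‖ * p (‖v‖⁻¹ • v) := by
  rcases eq_or_ne v 0 with rfl | hv
  · simp
  · rw [map_smul_eq_mul, norm_inv, norm_norm, mul_inv_cancel_left₀ (norm_ne_zero_iff.mpr hv)]

lemma abs_sub_le_mul_norm_of_sphere {p q : Seminorm ℝ E} {δ : ℝ}
    (h : ∀ v : E, ‖v‖ = 1 → |p v - q v| ≤ δ) (v : E) : |p v - q v| ≤ δ * ‖v‖ := by
  rcases eq_or_ne v 0 with rfl | hv
  · simp
  · rw [p.apply_eq_norm_mul_apply_inv_norm_smul, q.apply_eq_norm_mul_apply_inv_norm_smul,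
      ← mul_sub, abs_mul, abs_norm, mul_comm]
    exact mul_le_mul_of_nonneg_right (h _ (norm_inv_norm_smul_of_ne_zero hv)) (norm_nonneg v)

lemma exists_pos_mul_norm_le [FiniteDimensional ℝ E] (p : Seminorm ℝ E)
    (hp : ∀ v : E, ‖v‖ = 1 → 0 < p v) : ∃ m > 0, ∀ v, m * ‖v‖ ≤ p v := by
  have hcont : Continuous p := by
    simpa [continuousOn_univ] using p.convexOn.continuousOn_interior
  obtain ⟨m, hm, hmp⟩ := (isCompact_sphere (0 : E) 1).exists_forall_le' hcont.continuousOn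
    (fun v hv => hp v (by simpa using hv))
  refine ⟨m, hm, fun v => ?_⟩
  rcases eq_or_ne v 0 with rfl | hv
  · simp
  · rw [p.apply_eq_norm_mul_apply_inv_norm_smul, mul_comm]
    exact mul_le_mul_of_nonneg_left (hmp _ (by simpa using norm_inv_norm_smul_of_ne_zero hv))
      (norm_nonneg v)

end Seminorm

def perp (v : E2) : E2 := !₂[-v 1, v 0]

lemma norm_perp (v : E2) : ‖perp v‖ = ‖v‖ := by
  simp [perp, EuclideanSpace.norm_eq, Fin.sum_univ_two, add_comm]

lemma exists_SL2_shear {v : E2} (hv : ‖v‖ = 1) {lam : ℝ} (hlam : lam ≠ 0) :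
    ∃ T : SL2, toEuclideanLin (T : Matrix (Fin 2) (Fin 2) ℝ) (EuclideanSpace.single 0 1)
        = lam • v ∧
      toEuclideanLin (T : Matrix (Fin 2) (Fin 2) ℝ) (EuclideanSpace.single 1 1)
        = lam⁻¹ • perp v := by
  have hv2 : v 0 ^ 2 + v 1 ^ 2 = 1 := by
    simpa [Fin.sum_univ_two, hv] using (EuclideanSpace.norm_sq_eq v).symm
  refine ⟨⟨!![lam * v 0, -(lam⁻¹ * v 1); lam * v 1, lam⁻¹ * v 0], ?_⟩, ?_, ?_⟩
  · rw [Matrix.det_fin_two_of]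
    field_simp
    linear_combination hv2
  all_goals
    ext i
    fin_cases i <;> simp [perp, Matrix.mulVec, dotProduct, Fin.sum_univ_two]

lemma Seminorm.apply_toEuclideanLin_le (t : Seminorm ℝ E2) (M : Matrix (Fin 2) (Fin 2) ℝ)
    (v : E2) :
    t (toEuclideanLin M v) ≤ (t (toEuclideanLin M (EuclideanSpace.single 0 1)) +
      t (toEuclideanLin M (EuclideanSpace.single 1 1))) * ‖v‖ := by
  have hv : v = v 0 • EuclideanSpace.single 0 1 + v 1 • EuclideanSpace.single 1 1 := by
    ext i
    fin_cases i <;> simp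
  calc t (toEuclideanLin M v)
      ≤ ‖v 0‖ * t (toEuclideanLin M (EuclideanSpace.single 0 1)) +
        ‖v 1‖ * t (toEuclideanLin M (EuclideanSpace.single 1 1)) := by
        conv_lhs => rw [hv, map_add, map_smul, map_smul]
        exact (map_add_le_add t _ _).trans_eq (by rw [map_smul_eq_mul, map_smul_eq_mul])
    _ ≤ ‖v‖ * t (toEuclideanLin M (EuclideanSpace.single 0 1)) +
        ‖v‖ * t (toEuclideanLin M (EuclideanSpace.single 1 1)) := by
        gcongr <;> exact PiLp.norm_apply_le v _
    _ = _ := by ring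

section Functional

variable {J : Seminorm ℝ E2 → ℝ}

lemma Monot.nonneg (hmon : Monot J) (hhom : Homog J) (s : Seminorm ℝ E2) : 0 ≤ J s := by
  have h := hmon s ((0 : NNReal) • s) fun v => by simp
  rwa [hhom, NNReal.coe_zero, zero_pow two_ne_zero, zero_mul] at h

lemma Monot.abs_sub_le_of_abs_sub_le_mul (hmon : Monot J) (hhom : Homog J)
    {s s' : Seminorm ℝ E2} {η : ℝ} (hη₀ : 0 ≤ η) (hη₁ : η ≤ 1)
    (h : ∀ v, |s' v - s v| ≤ η * s v) : |J s' - J s| ≤ 3 * η * J s := by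
  have hJ := hmon.nonneg hhom s
  have hscale (c : ℝ) (hc : 0 ≤ c) (v : E2) : (c.toNNReal • s) v = c * s v := by
    rw [_root_.smul_apply, NNReal.smul_def, smul_eq_mul, Real.coe_toNNReal _ hc]
  have hup : J s' ≤ (1 + η) ^ 2 * J s := by
    have := hmon ((1 + η).toNNReal • s) s' fun v => by
      rw [hscale _ (by linarith)]; linarith [(abs_le.mp (h v)).2]
    rwa [hhom, Real.coe_toNNReal _ (by linarith)] at this
  have hlow : (1 - η) ^ 2 * J s ≤ J s' := by
    have := hmon s' ((1 - η).toNNReal • s) fun v => by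
      rw [hscale _ (by linarith)]; linarith [(abs_le.mp (h v)).1]
    rwa [hhom, Real.coe_toNNReal _ (by linarith)] at this
  rw [abs_le]
  constructor <;> nlinarith

lemma SL2inv.le_sq_mul (hinv : SL2inv J) (hmon : Monot J) (hhom : Homog J)
    (t : Seminorm ℝ E2) (T : SL2) :
    J t ≤ (t (toEuclideanLin (T : Matrix (Fin 2) (Fin 2) ℝ) (EuclideanSpace.single 0 1)) +
      t (toEuclideanLin (T : Matrix (Fin 2) (Fin 2) ℝ) (EuclideanSpace.single 1 1))) ^ 2 *
        J (normSeminorm ℝ E2) := by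
  set c := t (toEuclideanLin (T : Matrix (Fin 2) (Fin 2) ℝ) (EuclideanSpace.single 0 1)) +
    t (toEuclideanLin (T : Matrix (Fin 2) (Fin 2) ℝ) (EuclideanSpace.single 1 1))
  have hc : 0 ≤ c := add_nonneg (apply_nonneg _ _) (apply_nonneg _ _)
  have hle : compM t T ≤ c.toNNReal • normSeminorm ℝ E2 := fun v => by
    rw [_root_.smul_apply, NNReal.smul_def, smul_eq_mul, Real.coe_toNNReal _ hc]
    exact t.apply_toEuclideanLin_le _ v
  calc J t = J (compM t T) := (hinv t T).symm
    _ ≤ J (c.toNNReal • normSeminorm ℝ E2) := hmon _ _ hle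
    _ = c ^ 2 * J (normSeminorm ℝ E2) := by rw [hhom, Real.coe_toNNReal _ hc]

lemma SL2inv.le_of_apply_le (hinv : SL2inv J) (hmon : Monot J) (hhom : Homog J)
    {t : Seminorm ℝ E2} {v : E2} (hv : ‖v‖ = 1) {δ D : ℝ} (hδ : 0 < δ)
    (h₁ : t v ≤ δ) (h₂ : t (perp v) ≤ D) :
    J t ≤ δ * (1 + D) ^ 2 * J (normSeminorm ℝ E2) := by
  have hsqrt : 0 < √δ := Real.sqrt_pos.mpr hδ
  obtain ⟨T, hT₀, hT₁⟩ := exists_SL2_shear hv (inv_pos.mpr hsqrt).ne'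
  have hsum : t ((√δ)⁻¹ • v) + t ((√δ)⁻¹⁻¹ • perp v) ≤ √δ * (1 + D) := by
    rw [map_smul_eq_mul, map_smul_eq_mul, inv_inv, Real.norm_of_nonneg hsqrt.le,
      Real.norm_of_nonneg (inv_pos.mpr hsqrt).le]
    have hδ' : (√δ)⁻¹ * δ = √δ := by
      rw [inv_mul_eq_div, Real.div_sqrt]
    nlinarith [mul_le_mul_of_nonneg_left h₁ (inv_pos.mpr hsqrt).le,
      mul_le_mul_of_nonneg_left h₂ hsqrt.le]
  calc J t ≤ (√δ * (1 + D)) ^ 2 * J (normSeminorm ℝ E2) := by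
        refine (hinv.le_sq_mul hmon hhom t T).trans ?_
        rw [hT₀, hT₁]
        have := hmon.nonneg hhom (normSeminorm ℝ E2)
        gcongr
    _ = δ * (1 + D) ^ 2 * J (normSeminorm ℝ E2) := by
        rw [mul_pow, Real.sq_sqrt hδ.le]

lemma SL2inv.exists_forall_le_of_apply_eq_zero (hinv : SL2inv J)
    (hmon : Monot J) (hhom : Homog J) {s : Seminorm ℝ E2} {v : E2} (hv : ‖v‖ = 1)
    (hsv : s v = 0) {ε : ℝ} (hε : 0 < ε) :
    ∃ δ > (0 : ℝ), ∀ t : Seminorm ℝ E2,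
      (∀ u : E2, ‖u‖ = 1 → |t u - s u| ≤ δ) → J t ≤ ε := by
  set N := J (normSeminorm ℝ E2)
  set C := s (perp v)
  have hN : 0 ≤ N := hmon.nonneg hhom _
  set δ := min 1 (ε / ((2 + C) ^ 2 * N + 1))
  have hδ : 0 < δ := lt_min one_pos (by positivity)
  refine ⟨δ, hδ, fun t ht => ?_⟩
  have h₁ : t v ≤ δ := by linarith [(abs_le.mp (ht v hv)).2]
  have h₂ : t (perp v) ≤ 1 + C := by
    have hδ₁ : δ ≤ 1 := min_le_left _ _
    linarith [(abs_le.mp (ht _ ((norm_perp v).trans hv))).2]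
  calc J t ≤ δ * (1 + (1 + C)) ^ 2 * N := hinv.le_of_apply_le hmon hhom hv hδ h₁ h₂
    _ ≤ δ * ((2 + C) ^ 2 * N + 1) := by nlinarith
    _ ≤ ε := (le_div_iff₀ (by positivity)).mp (min_le_right _ _)

end Functional

theorem stmt1_general (J : Seminorm ℝ E2 → ℝ)
    (hmon : Monot J) (hhom : Homog J) (hinv : SL2inv J) :
    ∀ s : Seminorm ℝ E2, ∀ ε > (0 : ℝ), ∃ δ > (0 : ℝ), ∀ s' : Seminorm ℝ E2,
      (∀ v : E2, ‖v‖ = 1 → |s' v - s v| ≤ δ) → |J s' - J s| ≤ ε := by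
  intro s ε hε
  have hJ := hmon.nonneg hhom
  by_cases hdeg : ∃ v : E2, ‖v‖ = 1 ∧ s v = 0
  · obtain ⟨v, hv, hsv⟩ := hdeg
    obtain ⟨δ, hδ, hsmall⟩ := hinv.exists_forall_le_of_apply_eq_zero hmon hhom hv hsv hε
    refine ⟨δ, hδ, fun s' hs' => abs_le.mpr ⟨?_, ?_⟩⟩
    · linarith [hsmall s fun u _ => by simpa using hδ.le, hJ s']
    · linarith [hsmall s' hs', hJ s]
  · push Not at hdeg
    obtain ⟨m, hm, hms⟩ :=
      s.exists_pos_mul_norm_le fun v hv => (apply_nonneg s v).lt_of_ne' (hdeg v hv)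
    set η := min 1 (ε / (3 * J s + 1))
    have hη : 0 < η := lt_min one_pos (by positivity [hJ s])
    refine ⟨m * η, by positivity, fun s' hs' => ?_⟩
    have hclose (v : E2) : |s' v - s v| ≤ η * s v :=
      (Seminorm.abs_sub_le_mul_norm_of_sphere hs' v).trans (by nlinarith [hms v, norm_nonneg v])
    calc |J s' - J s| ≤ 3 * η * J s :=
          hmon.abs_sub_le_of_abs_sub_le_mul hhom hη.le (min_le_left _ _) hclose
      _ ≤ η * (3 * J s + 1) := by nlinarith [hJ s]
      _ ≤ ε := (le_div_iff₀ (by positivity [hJ s])).mp (min_le_right _ _)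

/-- A monotone, degree-2 homogeneous, `SL₂`-invariant functional on seminorms is continuous
with respect to the sup-metric `d(s,s') = max_{v ∈ S¹} |s v - s' v|`. -/
theorem stmt1 (J : Seminorm ℝ E2 → ℝ) (hpos : ∀ s, 0 ≤ J s)
    (hmon : Monot J) (hhom : Homog J) (hinv : SL2inv J) :
    ∀ s : Seminorm ℝ E2, ∀ ε > (0 : ℝ), ∃ δ > (0 : ℝ), ∀ s' : Seminorm ℝ E2,
      (∀ v : E2, ‖v‖ = 1 → |s' v - s v| ≤ δ) → |J s' - J s| ≤ ε :=
  stmt1_general J hmon hhom hinv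
end
end

section
/- Let J : {seminorms on ℝ²} → [0,∞) be monotone, homogeneous of degree 2, SL₂-invariant, and continuous. If a seminorm s on ℝ² is not a norm (i.e. s(v) = 0 for some v ≠ 0), then J(s) = 0. -/
open Matrix MeasureTheory Real

noncomputable section

/-!
If `s v = 0` with `v ≠ 0`, complete `v` to a basis `(v, u)` of determinant one and let `T` be the
matrix with columns `t v` and `t⁻¹ u`. Then `T ∈ SL₂` and `(s ∘ T)(w) = s(w₀ t v + w₁ t⁻¹ u) ≤ t⁻¹ s(u)`
on the unit disc, so the `SL₂`-orbit of `s` accumulates at the zero seminorm. By invariance `J` is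
constant on this orbit, so by continuity at `0` it equals `J 0`, which homogeneity forces to be `0`.
-/

def colMatrix (v u : E2) : Matrix (Fin 2) (Fin 2) ℝ := !![v 0, u 0; v 1, u 1]

theorem toEuclideanLin_colMatrix (v u w : E2) :
    Matrix.toEuclideanLin (colMatrix v u) w = w 0 • v + w 1 • u := by
  ext i
  fin_cases i <;> simp [colMatrix, Matrix.mulVec, dotProduct, Fin.sum_univ_two] <;> ring

theorem det_colMatrix (v u : E2) : (colMatrix v u).det = v 0 * u 1 - u 0 * v 1 :=
  Matrix.det_fin_two_of _ _ _ _

theorem det_colMatrix_smul_smul_inv (v u : E2) {t : ℝ} (ht : t ≠ 0) :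
    (colMatrix (t • v) (t⁻¹ • u)).det = (colMatrix v u).det := by
  simp only [det_colMatrix, PiLp.smul_apply, smul_eq_mul]
  field_simp

theorem exists_det_colMatrix_eq_one {v : E2} (hv : v ≠ 0) : ∃ u, (colMatrix v u).det = 1 := by
  have hnorm : v 0 ^ 2 + v 1 ^ 2 = ‖v‖ ^ 2 := by
    simp [EuclideanSpace.real_norm_sq_eq, Fin.sum_univ_two]
  have hpos : 0 < ‖v‖ ^ 2 := by positivity
  refine ⟨(‖v‖ ^ 2)⁻¹ • !₂[-v 1, v 0], ?_⟩
  simp only [Fin.isValue, det_colMatrix, PiLp.smul_apply, cons_val_one, cons_val_fin_one,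
    smul_eq_mul, cons_val_zero, mul_neg, neg_mul, sub_neg_eq_add]
  field_simp
  linarith

theorem compM_colMatrix_le {s : Seminorm ℝ E2} {v : E2} (hsv : s v = 0) (u w : E2) :
    compM s (colMatrix v u) w ≤ |w 1| * s u :=
  calc compM s (colMatrix v u) w = s (w 0 • v + w 1 • u) := by
        rw [compM, Seminorm.comp_apply, toEuclideanLin_colMatrix]
    _ ≤ s (w 0 • v) + s (w 1 • u) := map_add_le_add s _ _
    _ = |w 1| * s u := by simp [map_smul_eq_mul, hsv]

theorem exists_SL2_compM_le {s : Seminorm ℝ E2} {v : E2} (hv : v ≠ 0) (hsv : s v = 0)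
    {r : ℝ} (hr : 0 < r) : ∃ T : SL2, ∀ w : E2, ‖w‖ ≤ 1 → compM s T w ≤ r := by
  obtain ⟨u, hu⟩ := exists_det_colMatrix_eq_one hv
  set t := (s u + 1) / r
  have ht : 0 < t := by positivity
  refine ⟨⟨colMatrix (t • v) (t⁻¹ • u), by rw [det_colMatrix_smul_smul_inv v u ht.ne', hu]⟩,
    fun w hw => ?_⟩
  have hw1 : |w 1| ≤ 1 := (PiLp.norm_apply_le w 1).trans hw
  calc compM s (colMatrix (t • v) (t⁻¹ • u)) w ≤ |w 1| * s (t⁻¹ • u) :=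
        compM_colMatrix_le (by simp [map_smul_eq_mul, hsv]) _ _
    _ ≤ s (t⁻¹ • u) := mul_le_of_le_one_left (apply_nonneg _ _) hw1
    _ ≤ r := by
        rw [map_smul_eq_mul, Real.norm_eq_abs, abs_inv, abs_of_pos ht, inv_mul_le_iff₀ ht,
          div_mul_cancel₀ _ hr.ne']
        linarith

theorem Homog.apply_zero {J : Seminorm ℝ E2 → ℝ} (hJ : Homog J) : J 0 = 0 := by
  simpa using hJ 0 0

theorem stmt3_general (J : Seminorm ℝ E2 → ℝ)
    (hhom : Homog J) (hinv : SL2inv J)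
    (hcont : ∀ s : Seminorm ℝ E2, ∀ ε > (0 : ℝ), ∃ δ > (0 : ℝ), ∀ s' : Seminorm ℝ E2,
      (∀ v : E2, ‖v‖ = 1 → |s' v - s v| ≤ δ) → |J s' - J s| ≤ ε)
    (s : Seminorm ℝ E2) (hdeg : ∃ v : E2, v ≠ 0 ∧ s v = 0) :
    J s = 0 := by
  obtain ⟨v, hv, hsv⟩ := hdeg
  refine eq_of_forall_dist_le fun ε hε => ?_
  obtain ⟨δ, hδ, hclose⟩ := hcont 0 ε hε
  obtain ⟨T, hT⟩ := exists_SL2_compM_le hv hsv hδ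
  have h := hclose (compM s T) fun w hw => by
    simpa [abs_of_nonneg (apply_nonneg _ _)] using hT w hw.le
  rwa [hinv, hhom.apply_zero, ← Real.dist_eq] at h

/-- A monotone, degree-2 homogeneous, `SL₂`-invariant, continuous functional vanishes on
every seminorm which is not a norm. -/
theorem stmt3 (J : Seminorm ℝ E2 → ℝ) (hpos : ∀ s, 0 ≤ J s)
    (hmon : Monot J) (hhom : Homog J) (hinv : SL2inv J)
    (hcont : ∀ s : Seminorm ℝ E2, ∀ ε > (0 : ℝ), ∃ δ > (0 : ℝ), ∀ s' : Seminorm ℝ E2,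
      (∀ v : E2, ‖v‖ = 1 → |s' v - s v| ≤ δ) → |J s' - J s| ≤ ε)
    (s : Seminorm ℝ E2) (hdeg : ∃ v : E2, v ≠ 0 ∧ s v = 0) :
    J s = 0 :=
  stmt3_general J hhom hinv hcont s hdeg
end
end

section
/- The inscribed Riemannian Jacobian is the largest Jacobian: for every Jacobian J (monotone, degree-2 homogeneous, SL₂-invariant, with J(s₀) = 1) and every norm s on ℝ², J(s) ≤ J^i(s), where J^i(s) = π / |L| and |L| is the Lebesgue area of the Loewner ellipse (largest-area inscribed ellipse) of the unit ball of s. -/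
/-!
If the ellipse `M(D̄)` lies in the unit ball of `s`, then `s ∘ M` is dominated by the Euclidean
norm. After a reflection we may assume `det M > 0`; writing `M = √(det M) • T` with `T ∈ SL₂`,
homogeneity and invariance give `J (s ∘ M) = det M * J s`, so monotonicity yields
`|det M| * J s ≤ J s₀ = 1`. Taking the supremum over inscribed ellipses gives `|L| * J s ≤ π`,
and `|L| > 0` because a small round disc is always inscribed.
-/

open Matrix MeasureTheory Real

noncomputable section

lemma ellipseIn_iff_compM_le_norm (s : Seminorm ℝ E2) (M : Matrix (Fin 2) (Fin 2) ℝ) :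
    ellipseIn s M ↔ compM s M ≤ normSeminorm ℝ E2 := by
  constructor
  · intro hM v
    rcases eq_or_ne v 0 with rfl | hv
    · simp
    have hnv : 0 < ‖v‖ := norm_pos_iff.mpr hv
    have hu : ‖v‖⁻¹ • v ∈ Metric.closedBall (0 : E2) 1 := by
      simp [norm_smul, hnv.ne']
    have hMu : compM s M (‖v‖⁻¹ • v) ≤ 1 := hM ⟨_, hu, rfl⟩
    rw [map_smul_eq_mul, norm_inv, norm_norm] at hMu
    simpa using (inv_mul_le_iff₀ hnv).mp hMu
  · rintro hM _ ⟨v, hv, rfl⟩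
    exact (hM v).trans (mem_closedBall_zero_iff.mp hv)

lemma ellipseIn.mul_of_mapsTo {s : Seminorm ℝ E2} {M R : Matrix (Fin 2) (Fin 2) ℝ}
    (hM : ellipseIn s M)
    (hR : Set.MapsTo (Matrix.toEuclideanLin R) (Metric.closedBall 0 1) (Metric.closedBall 0 1)) :
    ellipseIn s (M * R) := by
  rw [ellipseIn, Matrix.toLpLin_mul_same, LinearMap.coe_comp, Set.image_comp]
  exact (Set.image_mono hR.image_subset).trans hM

lemma exists_ellipseIn_det_eq_abs {s : Seminorm ℝ E2} {M : Matrix (Fin 2) (Fin 2) ℝ}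
    (hM : ellipseIn s M) : ∃ N, ellipseIn s N ∧ N.det = |M.det| := by
  rcases le_or_gt 0 M.det with hdet | hdet
  · exact ⟨M, hM, (abs_of_nonneg hdet).symm⟩
  refine ⟨M * !![1, 0; 0, -1], hM.mul_of_mapsTo fun v hv => ?_, ?_⟩
  · simpa [EuclideanSpace.norm_eq, Fin.sum_univ_two, Matrix.mulVec, dotProduct] using hv
  · simp [Matrix.det_fin_two_of, abs_of_neg hdet]

lemma compM_smul (s : Seminorm ℝ E2) (c : NNReal) (M : Matrix (Fin 2) (Fin 2) ℝ) :
    compM s ((c : ℝ) • M) = c • compM s M := by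
  ext v
  simp [compM, map_smul_eq_mul, NNReal.smul_def]

lemma apply_compM_of_det_pos {J : Seminorm ℝ E2 → ℝ} (hhom : Homog J) (hinv : SL2inv J)
    (s : Seminorm ℝ E2) {M : Matrix (Fin 2) (Fin 2) ℝ} (hM : 0 < M.det) :
    J (compM s M) = M.det * J s := by
  set c : NNReal := NNReal.sqrt M.det.toNNReal
  have hc : (c : ℝ) ^ 2 = M.det := by simp [c, hM.le]
  have hc0 : (c : ℝ) ≠ 0 := by positivity
  have hT : ((c : ℝ)⁻¹ • M).det = 1 := by
    rw [Matrix.det_smul, Fintype.card_fin, inv_pow, hc, inv_mul_cancel₀ hM.ne']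
  have hMT : M = (c : ℝ) • ((c : ℝ)⁻¹ • M) := by rw [smul_smul, mul_inv_cancel₀ hc0, one_smul]
  rw [hMT, compM_smul, hhom, ← hMT, ← hc]
  exact congrArg _ (hinv s ⟨_, hT⟩)

lemma IsJacobian.abs_det_mul_le_one {J : Seminorm ℝ E2 → ℝ} (hJ : IsJacobian J)
    {s : Seminorm ℝ E2} {M : Matrix (Fin 2) (Fin 2) ℝ} (hM : ellipseIn s M) :
    |M.det| * J s ≤ 1 := by
  obtain ⟨-, hmon, hhom, hinv, hnorm⟩ := hJ
  obtain ⟨N, hN, hNdet⟩ := exists_ellipseIn_det_eq_abs hM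
  rcases (abs_nonneg M.det).eq_or_lt with hdet | hdet
  · simp [← hdet]
  calc |M.det| * J s = J (compM s N) := by
        rw [← hNdet, apply_compM_of_det_pos hhom hinv s (hNdet ▸ hdet)]
    _ ≤ J (normSeminorm ℝ E2) := hmon _ _ ((ellipseIn_iff_compM_le_norm s N).mp hN)
    _ = 1 := hnorm

def inscribedAreas (s : Seminorm ℝ E2) : Set ℝ :=
  {a : ℝ | ∃ M : Matrix (Fin 2) (Fin 2) ℝ, ellipseIn s M ∧ a = π * |M.det|}

lemma loewnerArea_nonneg (s : Seminorm ℝ E2) : 0 ≤ LoewnerArea s :=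
  Real.sSup_nonneg fun _ ⟨_, _, ha⟩ => ha ▸ by positivity

lemma IsJacobian.le_div_of_mem_inscribedAreas {J : Seminorm ℝ E2 → ℝ} (hJ : IsJacobian J)
    {s : Seminorm ℝ E2} (hJs : 0 < J s) {a : ℝ} (ha : a ∈ inscribedAreas s) : a ≤ π / J s := by
  obtain ⟨M, hM, rfl⟩ := ha
  rw [le_div_iff₀ hJs, mul_assoc]
  exact mul_le_of_le_one_right pi_pos.le (hJ.abs_det_mul_le_one hM)

lemma exists_pos_mem_inscribedAreas (s : Seminorm ℝ E2) : ∃ a, 0 < a ∧ a ∈ inscribedAreas s := by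
  have hs : Continuous s := continuousOn_univ.mp (s.convexOn.continuousOn isOpen_univ)
  obtain ⟨C, hC, hsC⟩ := s.bound_of_continuous_normedSpace hs
  refine ⟨π * |((C⁻¹ : ℝ) • (1 : Matrix (Fin 2) (Fin 2) ℝ)).det|, ?_, _, ?_, rfl⟩
  · simp [pi_pos, hC]
  rw [ellipseIn_iff_compM_le_norm]
  intro v
  simp only [compM, Seminorm.comp_apply, map_smul, Matrix.toLpLin_one, LinearMap.smul_apply,
    LinearMap.id_apply, map_smul_eq_mul, norm_inv, Real.norm_of_nonneg hC.le, coe_normSeminorm]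
  exact (inv_mul_le_iff₀ hC).mpr (hsC v)

theorem stmt6_general (J : Seminorm ℝ E2 → ℝ) (hJ : IsJacobian J)
    (s : Seminorm ℝ E2) :
    J s ≤ π / LoewnerArea s := by
  rcases (hJ.1 s).eq_or_lt with hJs | hJs
  · rw [← hJs]
    exact div_nonneg pi_pos.le (loewnerArea_nonneg s)
  have hbound : ∀ a ∈ inscribedAreas s, a ≤ π / J s := fun _ =>
    hJ.le_div_of_mem_inscribedAreas hJs
  obtain ⟨a, ha, haS⟩ := exists_pos_mem_inscribedAreas s
  -- `hbound` makes `inscribedAreas s` bounded above, so `sSup` is not the junk value `0`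
  have hA : 0 < LoewnerArea s := ha.trans_le (le_csSup ⟨_, hbound⟩ haS)
  rw [le_div_iff₀ hA, ← le_div_iff₀' hJs]
  exact csSup_le ⟨a, haS⟩ hbound

/-- The inscribed Riemannian Jacobian `J^i(s) = π / |L|` is the largest Jacobian. -/
theorem stmt6 (J : Seminorm ℝ E2 → ℝ) (hJ : IsJacobian J)
    (s : Seminorm ℝ E2) (hs : IsNorm s) :
    J s ≤ π / LoewnerArea s :=
  stmt6_general J hJ s
end
end

section
/- Let 𝓘 be a definition of energy on seminorms of ℝ², i.e. a continuous map 𝓘 : 𝔖₂ → [0,∞) that is monotone, degree-2 homogeneous, SO₂-invariant, and proper (𝓘⁻¹([0,1]) compact). Then there exists a constant k ≥ 1 such that (1/k)·𝓘(s) ≤ I²₊(s) ≤ k·𝓘(s) for all seminorms s, where I²₊(s) = max_{v∈S¹} s(v)². -/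
open Matrix MeasureTheory Real

noncomputable section

/-- Continuity with respect to the sup-metric `d(s,s') = max_{v ∈ S¹} |s v - s' v|`. -/
def ContinuousSN (I : Seminorm ℝ E2 → ℝ) : Prop :=
  ∀ s : Seminorm ℝ E2, ∀ ε > (0 : ℝ), ∃ δ > (0 : ℝ), ∀ s' : Seminorm ℝ E2,
    (∀ v : E2, ‖v‖ = 1 → |s' v - s v| ≤ δ) → |I s' - I s| ≤ ε

/-- `SO₂`-invariance of a functional on seminorms. -/
def SO2inv (I : Seminorm ℝ E2 → ℝ) : Prop :=
  ∀ (s : Seminorm ℝ E2) (T : Matrix (Fin 2) (Fin 2) ℝ),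
    T ∈ Matrix.orthogonalGroup (Fin 2) ℝ → T.det = 1 → I (compM s T) = I s

/-- Properness: the sublevel set `I⁻¹([0,1])` is (sequentially) compact with respect to the
sup-metric on the unit circle. -/
def ProperEnergy (I : Seminorm ℝ E2 → ℝ) : Prop :=
  ∀ f : ℕ → Seminorm ℝ E2, (∀ n, I (f n) ≤ 1) →
    ∃ (s : Seminorm ℝ E2) (φ : ℕ → ℕ), StrictMono φ ∧ I s ≤ 1 ∧
      Filter.Tendsto (fun n => ⨆ v : Metric.sphere (0 : E2) 1, |f (φ n) (v : E2) - s (v : E2)|)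
        Filter.atTop (nhds 0)

/-- A (conformally invariant) definition of energy. -/
def IsEnergy (I : Seminorm ℝ E2 → ℝ) : Prop :=
  (∀ s, 0 ≤ I s) ∧ ContinuousSN I ∧ Monot I ∧ Homog I ∧ SO2inv I ∧ ProperEnergy I

namespace Stmt11Aux

/-- The sup of a seminorm on the unit sphere. -/
noncomputable def NS (s : Seminorm ℝ E2) : ℝ := ⨆ v : Metric.sphere (0 : E2) 1, s (v : E2)

lemma norm_of_mem_sphere {v : E2} (hv : v ∈ Metric.sphere (0 : E2) 1) : ‖v‖ = 1 := by
  simpa [Metric.mem_sphere, dist_zero_right] using hv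

instance : Nonempty (Metric.sphere (0 : E2) 1) :=
  ⟨⟨EuclideanSpace.single 0 1, by simp [Metric.mem_sphere, dist_zero_right,
      EuclideanSpace.norm_single]⟩⟩

lemma abs_coord_le (v : E2) (i : Fin 2) : |v i| ≤ ‖v‖ := by
  rw [EuclideanSpace.norm_eq, ← Real.sqrt_sq_eq_abs]
  apply Real.sqrt_le_sqrt
  have : |v i| ^ 2 ≤ ∑ j, ‖v j‖ ^ 2 := by
    have := Finset.single_le_sum (f := fun j => ‖v j‖ ^ 2)
      (fun j _ => by positivity) (Finset.mem_univ i)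
    simpa [Real.norm_eq_abs, sq_abs] using this
  simpa [sq_abs] using this

lemma decomp (v : E2) :
    v = v 0 • EuclideanSpace.single 0 (1 : ℝ) + v 1 • EuclideanSpace.single 1 (1 : ℝ) := by
  ext i
  fin_cases i <;> simp [EuclideanSpace.single_apply]

lemma seminorm_bound (s : Seminorm ℝ E2) (v : E2) :
    s v ≤ (s (EuclideanSpace.single 0 (1 : ℝ)) + s (EuclideanSpace.single 1 (1 : ℝ))) * ‖v‖ := by
  set e0 : E2 := EuclideanSpace.single 0 (1 : ℝ)
  set e1 : E2 := EuclideanSpace.single 1 (1 : ℝ)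
  calc s v = s (v 0 • e0 + v 1 • e1) := by rw [← decomp v]
    _ ≤ s (v 0 • e0) + s (v 1 • e1) := map_add_le_add s _ _
    _ = |v 0| * s e0 + |v 1| * s e1 := by
        rw [map_smul_eq_mul, map_smul_eq_mul, Real.norm_eq_abs, Real.norm_eq_abs]
    _ ≤ ‖v‖ * s e0 + ‖v‖ * s e1 := by
        exact add_le_add
          (mul_le_mul_of_nonneg_right (abs_coord_le v 0) (apply_nonneg s e0))
          (mul_le_mul_of_nonneg_right (abs_coord_le v 1) (apply_nonneg s e1))
    _ = (s e0 + s e1) * ‖v‖ := by ring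

lemma bddAbove_range (s : Seminorm ℝ E2) :
    BddAbove (Set.range fun v : Metric.sphere (0 : E2) 1 => s (v : E2)) := by
  refine ⟨s (EuclideanSpace.single 0 (1 : ℝ)) + s (EuclideanSpace.single 1 (1 : ℝ)), ?_⟩
  rintro _ ⟨v, rfl⟩
  have h := seminorm_bound s (v : E2)
  rw [norm_of_mem_sphere v.2] at h
  simpa using h

lemma bddAbove_range_abs_sub (s t : Seminorm ℝ E2) :
    BddAbove (Set.range fun v : Metric.sphere (0 : E2) 1 => |s (v : E2) - t (v : E2)|) := by
  obtain ⟨B, hB⟩ := bddAbove_range s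
  obtain ⟨C, hC⟩ := bddAbove_range t
  refine ⟨B + C, ?_⟩
  rintro _ ⟨v, rfl⟩
  have h1 : s (v : E2) ≤ B := hB ⟨v, rfl⟩
  have h2 : t (v : E2) ≤ C := hC ⟨v, rfl⟩
  have h3 : 0 ≤ s (v : E2) := apply_nonneg s _
  have h4 : 0 ≤ t (v : E2) := apply_nonneg t _
  rw [abs_sub_le_iff]
  constructor <;> linarith

lemma apply_le_NS (s : Seminorm ℝ E2) {v : E2} (hv : ‖v‖ = 1) : s v ≤ NS s :=
  le_ciSup (bddAbove_range s) (⟨v, by simp [Metric.mem_sphere, dist_zero_right, hv]⟩ :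
    Metric.sphere (0 : E2) 1)

lemma NS_nonneg (s : Seminorm ℝ E2) : 0 ≤ NS s := by
  obtain ⟨v⟩ := (inferInstance : Nonempty (Metric.sphere (0 : E2) 1))
  exact le_trans (apply_nonneg s (v : E2)) (apply_le_NS s (norm_of_mem_sphere v.2))

lemma apply_le_NS_mul (s : Seminorm ℝ E2) (v : E2) : s v ≤ NS s * ‖v‖ := by
  rcases eq_or_ne v 0 with rfl | hv
  · simp [map_zero]
  · have hn : 0 < ‖v‖ := norm_pos_iff.mpr hv
    have hw : ‖‖v‖⁻¹ • v‖ = 1 := by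
      rw [norm_smul, Real.norm_eq_abs, abs_inv, abs_of_pos hn, inv_mul_cancel₀ hn.ne']
    have h1 : s (‖v‖⁻¹ • v) ≤ NS s := apply_le_NS s hw
    have h2 : s (‖v‖⁻¹ • v) = ‖v‖⁻¹ * s v := by
      rw [map_smul_eq_mul, Real.norm_eq_abs, abs_inv, abs_of_pos hn]
    rw [h2] at h1
    calc s v = ‖v‖ * (‖v‖⁻¹ * s v) := by field_simp
      _ ≤ ‖v‖ * NS s := by exact mul_le_mul_of_nonneg_left h1 hn.le
      _ = NS s * ‖v‖ := mul_comm _ _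

lemma bddAbove_range_sq (s : Seminorm ℝ E2) :
    BddAbove (Set.range fun v : Metric.sphere (0 : E2) 1 => (s (v : E2)) ^ 2) := by
  refine ⟨NS s ^ 2, ?_⟩
  rintro _ ⟨v, rfl⟩
  exact pow_le_pow_left₀ (apply_nonneg s _) (apply_le_NS s (norm_of_mem_sphere v.2)) 2

lemma Iplus_eq (s : Seminorm ℝ E2) : Iplus s = NS s ^ 2 := by
  unfold Iplus
  apply le_antisymm
  · exact ciSup_le fun v =>
      pow_le_pow_left₀ (apply_nonneg s _) (apply_le_NS s (norm_of_mem_sphere v.2)) 2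
  · have hsup0 : 0 ≤ ⨆ v : Metric.sphere (0 : E2) 1, (s (v : E2)) ^ 2 := by
      obtain ⟨v⟩ := (inferInstance : Nonempty (Metric.sphere (0 : E2) 1))
      exact le_trans (sq_nonneg _) (le_ciSup (bddAbove_range_sq s) v)
    have h1 : NS s ≤ Real.sqrt (⨆ v : Metric.sphere (0 : E2) 1, (s (v : E2)) ^ 2) := by
      apply ciSup_le
      intro v
      rw [show s (v : E2) = Real.sqrt ((s (v : E2)) ^ 2) by
        rw [Real.sqrt_sq (apply_nonneg s _)]]
      exact Real.sqrt_le_sqrt (le_ciSup (bddAbove_range_sq s) v)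
    calc NS s ^ 2 ≤ Real.sqrt (⨆ v : Metric.sphere (0 : E2) 1, (s (v : E2)) ^ 2) ^ 2 :=
          pow_le_pow_left₀ (NS_nonneg s) h1 2
      _ = _ := Real.sq_sqrt hsup0

lemma NS_smul (c : NNReal) (s : Seminorm ℝ E2) : NS (c • s) = (c : ℝ) * NS s := by
  unfold NS
  have : ∀ v : Metric.sphere (0 : E2) 1, (c • s) (v : E2) = (c : ℝ) * s (v : E2) := by
    intro v
    rw [Seminorm.smul_apply, NNReal.smul_def, smul_eq_mul]
  simp only [this]
  exact (Real.mul_iSup_of_nonneg c.coe_nonneg _).symm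

end Stmt11Aux

open Stmt11Aux in
/-- Any two definitions of energy are comparable: every definition of energy is comparable
to the Reshetnyak energy `I²₊`. -/
theorem stmt11 (I : Seminorm ℝ E2 → ℝ) (hI : IsEnergy I) :
    ∃ k : ℝ, 1 ≤ k ∧ ∀ s : Seminorm ℝ E2,
      (1 / k) * I s ≤ Iplus s ∧ Iplus s ≤ k * I s := by
  obtain ⟨hpos, hcont, hmono, hhom, -, hproper⟩ := hI
  -- Step A : upper bound for I in terms of Iplus
  have stepA : ∀ s : Seminorm ℝ E2, I s ≤ Iplus s * I (normSeminorm ℝ E2) := by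
    intro s
    set c : NNReal := ⟨NS s, NS_nonneg s⟩ with hc
    have hle : s ≤ c • normSeminorm ℝ E2 := by
      rw [Seminorm.le_def]
      intro v
      have : (c • normSeminorm ℝ E2) v = NS s * ‖v‖ := by
        rw [Seminorm.smul_apply, NNReal.smul_def, smul_eq_mul, coe_normSeminorm]
        rfl
      rw [this]
      exact apply_le_NS_mul s v
    have h1 : I s ≤ I (c • normSeminorm ℝ E2) := hmono _ _ hle
    rw [hhom c _] at h1
    have hcc : (c : ℝ) = NS s := rfl
    rw [hcc] at h1
    rw [Iplus_eq]
    exact h1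
  -- Step B : existence of a uniform lower bound for I in terms of Iplus
  have stepB : ∃ k0 : ℝ, 0 ≤ k0 ∧ ∀ s : Seminorm ℝ E2, Iplus s ≤ k0 * I s := by
    by_contra hcon
    push_neg at hcon
    choose g hg using fun n : ℕ => hcon ((n : ℝ) + 1) (by positivity)
    -- hg n : (n+1) * I (g n) < Iplus (g n)
    have hNpos : ∀ n, 0 < NS (g n) := by
      intro n
      have h := hg n
      rw [Iplus_eq] at h
      have h0 := hpos (g n)
      have hN0 := NS_nonneg (g n)
      nlinarith
    set t : ℕ → Seminorm ℝ E2 :=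
      fun n => (Real.toNNReal (NS (g n))⁻¹) • g n with ht
    have hNt : ∀ n, NS (t n) = 1 := by
      intro n
      rw [ht]
      rw [NS_smul]
      rw [Real.coe_toNNReal _ (inv_nonneg.2 (hNpos n).le)]
      exact inv_mul_cancel₀ (hNpos n).ne'
    have hIt : ∀ n, I (t n) < 1 / ((n : ℝ) + 1) := by
      intro n
      rw [ht, hhom]
      have hcc : ((Real.toNNReal (NS (g n))⁻¹ : NNReal) : ℝ) = (NS (g n))⁻¹ :=
        Real.coe_toNNReal _ (inv_nonneg.2 (hNpos n).le)
      rw [hcc]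
      have h := hg n
      rw [Iplus_eq] at h
      have hn1 : (0 : ℝ) < (n : ℝ) + 1 := by positivity
      have hN2 : (0 : ℝ) < NS (g n) ^ 2 := pow_pos (hNpos n) 2
      rw [lt_div_iff₀ hn1]
      calc (NS (g n))⁻¹ ^ 2 * I (g n) * ((n : ℝ) + 1)
          = (((n : ℝ) + 1) * I (g n)) * (NS (g n) ^ 2)⁻¹ := by rw [inv_pow]; ring
        _ < NS (g n) ^ 2 * (NS (g n) ^ 2)⁻¹ :=
            mul_lt_mul_of_pos_right h (inv_pos.2 hN2)
        _ = 1 := mul_inv_cancel₀ hN2.ne'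
    have hIt1 : ∀ n, I (t n) ≤ 1 := by
      intro n
      refine le_trans (hIt n).le ?_
      rw [div_le_one (by positivity)]
      linarith [Nat.cast_nonneg (α := ℝ) n]
    obtain ⟨sl, φ, hφ, hIsl1, htend⟩ := hproper t hIt1
    -- I sl = 0
    have hIsl0 : I sl = 0 := by
      refine le_antisymm ?_ (hpos sl)
      by_contra hpos'
      push_neg at hpos'
      obtain ⟨δ, hδ, hcl⟩ := hcont sl (I sl / 2) (by linarith)
      have hev1 : ∀ᶠ n in Filter.atTop,
          (⨆ v : Metric.sphere (0 : E2) 1, |t (φ n) (v : E2) - sl (v : E2)|) < δ :=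
        htend.eventually_lt_const hδ
      obtain ⟨N1, hN1⟩ := Filter.eventually_atTop.mp hev1
      obtain ⟨N2, hN2⟩ := exists_nat_gt (2 / I sl)
      set n := max N1 N2 with hn
      have hd : ∀ v : E2, ‖v‖ = 1 → |t (φ n) v - sl v| ≤ δ := by
        intro v hv
        refine le_trans (le_ciSup (bddAbove_range_abs_sub (t (φ n)) sl)
          (⟨v, by simp [Metric.mem_sphere, dist_zero_right, hv]⟩ :
            Metric.sphere (0 : E2) 1)) ?_
        exact (hN1 n (le_max_left _ _)).le
      have habs := hcl (t (φ n)) hd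
      have hlt := hIt (φ n)
      have hφn : (n : ℝ) ≤ (φ n : ℝ) := Nat.cast_le.mpr hφ.le_apply
      have hN2' : (N2 : ℝ) ≤ (n : ℝ) := Nat.cast_le.mpr (le_max_right _ _)
      have h2 : 2 / I sl < (φ n : ℝ) := by linarith
      have h3 : 1 / ((φ n : ℝ) + 1) < I sl / 2 := by
        rw [div_lt_iff₀ (by positivity)]
        rw [div_lt_iff₀ hpos'] at h2
        nlinarith
      have habs' := abs_le.mp habs
      linarith [habs'.1, habs'.2]
    -- sl is at least 1/2 somewhere on the sphere
    obtain ⟨v0, hv0⟩ : ∃ v0 : Metric.sphere (0 : E2) 1, (1 : ℝ) / 2 ≤ sl (v0 : E2) := by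
      have hev := htend.eventually_lt_const (show (0 : ℝ) < 1 / 4 by norm_num)
      obtain ⟨n, hn⟩ := hev.exists
      have h34 : (3 : ℝ) / 4 < NS (t (φ n)) := by rw [hNt]; norm_num
      obtain ⟨v, hv⟩ := exists_lt_of_lt_ciSup h34
      refine ⟨v, ?_⟩
      have hd : |t (φ n) (v : E2) - sl (v : E2)| ≤ 1 / 4 :=
        le_trans (le_ciSup (bddAbove_range_abs_sub (t (φ n)) sl) v) hn.le
      have := abs_le.mp hd
      linarith [this.1, this.2]
    -- blow up sl to contradict properness
    set f : ℕ → Seminorm ℝ E2 := fun n => ((n : NNReal)) • sl with hf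
    have hf1 : ∀ n, I (f n) ≤ 1 := by
      intro n
      rw [hf, hhom, hIsl0, mul_zero]
      norm_num
    obtain ⟨u, ψ, hψ, -, htend2⟩ := hproper f hf1
    have hev := htend2.eventually_lt_const (show (0 : ℝ) < 1 by norm_num)
    obtain ⟨M, hM⟩ := Filter.eventually_atTop.mp hev
    obtain ⟨N, hN⟩ := exists_nat_ge (2 * (1 + u (v0 : E2)))
    set n := max M N with hn
    have hd : |f (ψ n) (v0 : E2) - u (v0 : E2)| < 1 :=
      lt_of_le_of_lt (le_ciSup (bddAbove_range_abs_sub (f (ψ n)) u) v0) (hM n (le_max_left _ _))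
    have hfval : f (ψ n) (v0 : E2) = (ψ n : ℝ) * sl (v0 : E2) := by
      rw [hf, Seminorm.smul_apply, NNReal.smul_def, smul_eq_mul]
      norm_num
    have hψn : (n : ℝ) ≤ (ψ n : ℝ) := Nat.cast_le.mpr hψ.le_apply
    have hNn : (N : ℝ) ≤ (n : ℝ) := Nat.cast_le.mpr (le_max_right _ _)
    have hlow : (ψ n : ℝ) * (1 / 2) ≤ (ψ n : ℝ) * sl (v0 : E2) :=
      mul_le_mul_of_nonneg_left hv0 (Nat.cast_nonneg _)
    have habs := abs_lt.mp hd
    rw [hfval] at habs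
    linarith [habs.1, habs.2]
  obtain ⟨k0, hk00, hk0⟩ := stepB
  refine ⟨max 1 (max (I (normSeminorm ℝ E2)) k0), le_max_left _ _, fun s => ?_⟩
  set k := max 1 (max (I (normSeminorm ℝ E2)) k0) with hk
  have hk1 : (1 : ℝ) ≤ k := le_max_left _ _
  have hkpos : (0 : ℝ) < k := lt_of_lt_of_le one_pos hk1
  have hkI : I (normSeminorm ℝ E2) ≤ k := le_trans (le_max_left _ _) (le_max_right _ _)
  have hkk0 : k0 ≤ k := le_trans (le_max_right _ _) (le_max_right _ _)
  have hIpl : 0 ≤ Iplus s := by rw [Iplus_eq]; positivity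
  constructor
  · have h1 : I s ≤ Iplus s * k :=
      (stepA s).trans (mul_le_mul_of_nonneg_left hkI hIpl)
    rw [show (1 / k) * I s = I s / k by ring, div_le_iff₀ hkpos]
    exact h1
  · exact (hk0 s).trans (mul_le_mul_of_nonneg_right hkk0 (hpos s))
end
end
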